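/- Let N be a 3-prime left near-ring whose multiplicative center Z contains a nonzero element z such that z + z ∈ Z. Then the additive group (N,+) is abelian. -/

import Mathlib

/-!
Write `2z` for `z + z`. Since both `z` and `2z` are central, left distributivity gives
`z(x + y) + z(x + y) = 2z(x + y) = 2zx + 2zy = (zx + zx) + (zy + zy)`, and cancelling in the group
`(N, +)` leaves `zx + zy = zy + zx`, i.e. `z(x + y) = z(y + x)`. So `z` annihilates
`d = (x + y) - (y + x)` from the left, hence `z n d = n z d = 0` for every `n`, and 3-primeness
with `z ≠ 0` forces `d = 0`.
-/

class LeftNearRing (N : Type*) extends AddGroup N, Mul N where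
  mul_assoc : ∀ a b c : N, a * b * c = a * (b * c)
  left_distrib : ∀ a b c : N, a * (b + c) = a * b + a * c

theorem add_comm_of_add_add_self_eq {G : Type*} [AddGroup G] {a b : G}
    (h : a + a + (b + b) = a + b + (a + b)) : a + b = b + a := by
  simp only [add_assoc, add_right_inj] at h
  simpa only [← add_assoc, add_left_inj] using h

namespace LeftNearRing

def IsThreePrime (N : Type*) [LeftNearRing N] : Prop :=
  ∀ a b : N, (∀ n : N, a * n * b = 0) → a = 0 ∨ b = 0

variable {N : Type*} [LeftNearRing N]

protected theorem mul_zero (a : N) : a * 0 = 0 := by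
  have h := left_distrib a 0 0
  rwa [add_zero, left_eq_add] at h

protected theorem mul_neg (a b : N) : a * -b = -(a * b) := by
  refine (neg_eq_of_add_eq_zero_right ?_).symm
  rw [← left_distrib, add_neg_cancel, LeftNearRing.mul_zero]

protected theorem mul_sub (a b c : N) : a * (b - c) = a * b - a * c := by
  rw [sub_eq_add_neg, left_distrib, LeftNearRing.mul_neg, ← sub_eq_add_neg]

theorem add_self_mul_of_central {z : N} (hz : ∀ x : N, z * x = x * z)
    (hzz : ∀ x : N, (z + z) * x = x * (z + z)) (w : N) : (z + z) * w = z * w + z * w := by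
  rw [hzz, left_distrib, ← hz]

theorem central_mul_add_comm {z : N} (hz : ∀ x : N, z * x = x * z)
    (hzz : ∀ x : N, (z + z) * x = x * (z + z)) (x y : N) : z * x + z * y = z * y + z * x := by
  have h := add_self_mul_of_central hz hzz (x + y)
  rw [left_distrib, left_distrib, add_self_mul_of_central hz hzz,
    add_self_mul_of_central hz hzz] at h
  exact add_comm_of_add_add_self_eq h

theorem eq_of_central_mul_eq (hp : IsThreePrime N) {z : N} (hz : ∀ x : N, z * x = x * z)
    (hz0 : z ≠ 0) {a b : N} (h : z * a = z * b) : a = b := by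
  have hza : z * (a - b) = 0 := by rw [LeftNearRing.mul_sub, h, sub_self]
  have hann : ∀ n : N, z * n * (a - b) = 0 := fun n => by
    rw [hz, mul_assoc, hza, LeftNearRing.mul_zero]
  exact sub_eq_zero.mp ((hp z _ hann).resolve_left hz0)

end LeftNearRing

theorem stmt12 {N : Type*} [LeftNearRing N]
    (hp : ∀ a b : N, (∀ n : N, a * n * b = 0) → a = 0 ∨ b = 0)
    (z : N) (hz : ∀ x : N, z * x = x * z) (hz0 : z ≠ 0)
    (hzz : ∀ x : N, (z + z) * x = x * (z + z)) :
    ∀ x y : N, x + y = y + x := fun x y =>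
  LeftNearRing.eq_of_central_mul_eq hp hz hz0 <| by
    rw [LeftNearRing.left_distrib, LeftNearRing.left_distrib,
      LeftNearRing.central_mul_add_comm hz hzz]
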